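/- Let F be strictly convex, let S be convex, and let I ≠ ∅. Suppose that for every x ∈ S the farthest projection P_F(x; Ω_i) is nonempty for all i ∈ I. Then the set of minimizers over S of the function C₁(x) := max{C_F(x; Ω_i) : i ∈ I} has at most one element. -/

import Mathlib

/-!
If `x ≠ y` both minimize `C₁` over `S`, look at a point `z` of the open segment between them, an
index `i` at which the maximum defining `C₁ z` is attained, and a farthest point `ω ∈ P_F(z; Ω i)`.
Since `ω - z` is a proper convex combination of `ω - x ≠ ω - y`, strict convexity of `F` makes the
gauge of `ω - z` strictly smaller than the larger of the gauges of `ω - x` and `ω - y`, so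
`C₁ z < max (C₁ x) (C₁ y) = min C₁`, which is absurd.
-/

open Set Pointwise Filter Topology Bornology Function

variable {X : Type*} [NormedAddCommGroup X] [NormedSpace ℝ X]

/-- The Minkowski gauge of `F`: `ρ_F(x) = inf {t ≥ 0 : x ∈ t • F}`. -/
noncomputable def rhoF (F : Set X) (x : X) : ℝ :=
  sInf {t : ℝ | 0 ≤ t ∧ x ∈ t • F}

/-- The maximal time function `C_F(x; Q) = sup {ρ_F(q - x) : q ∈ Q}`. -/
noncomputable def maxTime (F Q : Set X) (x : X) : ℝ :=
  sSup ((fun q => rhoF F (q - x)) '' Q)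

/-- The minimal time function `T_F(x; Θ) = inf {ρ_F(q - x) : q ∈ Θ}`. -/
noncomputable def minTime (F Θ : Set X) (x : X) : ℝ :=
  sInf ((fun q => rhoF F (q - x)) '' Θ)

/-- The farthest projection `P_F(x; Ω) = {ω ∈ Ω : ρ_F(ω - x) = C_F(x; Ω)}`. -/
def farProj (F Ω : Set X) (x : X) : Set X :=
  {ω ∈ Ω | rhoF F (ω - x) = maxTime F Ω x}

theorem rhoF_eq_gauge {F : Set X} (h0 : (0 : X) ∈ F) : rhoF F = gauge F := by
  ext x
  rcases eq_or_ne x 0 with rfl | hx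
  · rw [gauge_zero]
    refine le_antisymm (csInf_le ⟨0, fun t ht => ht.1⟩ ⟨le_rfl, ?_⟩)
      (Real.sInf_nonneg fun t ht => ht.1)
    simpa using smul_mem_smul_set (a := (0 : ℝ)) h0
  · unfold rhoF gauge
    congr 1
    ext t
    refine ⟨fun ⟨ht, hxt⟩ => ⟨ht.lt_of_ne ?_, hxt⟩, fun ⟨ht, hxt⟩ => ⟨ht.le, hxt⟩⟩
    rintro rfl
    exact hx (mem_singleton_iff.1 (zero_smul_set_subset F hxt))

-- Strict in the strong sense: the inequality is required even when `f x = f y`.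
def StrictQuasiconvexOn (𝕜 : Type*) {E β : Type*} [Semiring 𝕜] [PartialOrder 𝕜] [AddCommMonoid E]
    [SMul 𝕜 E] [LinearOrder β] (s : Set E) (f : E → β) : Prop :=
  ∀ ⦃x⦄, x ∈ s → ∀ ⦃y⦄, y ∈ s → x ≠ y → ∀ ⦃a b : 𝕜⦄, 0 < a → 0 < b → a + b = 1 →
    f (a • x + b • y) < max (f x) (f y)

theorem StrictQuasiconvexOn.subsingleton_setOf_forall_le {𝕜 E β : Type*} [Field 𝕜] [LinearOrder 𝕜]
    [IsStrictOrderedRing 𝕜] [AddCommGroup E] [Module 𝕜 E] [LinearOrder β] {s : Set E} {f : E → β}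
    (hf : StrictQuasiconvexOn 𝕜 s f) (hs : Convex 𝕜 s) :
    {x ∈ s | ∀ y ∈ s, f x ≤ f y}.Subsingleton := by
  rintro x ⟨hx, hx_min⟩ y ⟨hy, hy_min⟩
  by_contra hxy
  have hmid : (1 / 2 : 𝕜) • x + (1 / 2 : 𝕜) • y ∈ s :=
    hs hx hy (by positivity) (by positivity) (add_halves 1)
  exact (hf hx hy hxy (by positivity) (by positivity) (add_halves 1)).not_ge
    (max_le (hx_min _ hmid) (hy_min _ hmid))

theorem StrictConvex.strictQuasiconvexOn_gauge {F : Set X} (hFs : StrictConvex ℝ F)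
    (hFc : IsClosed F) (hF0 : F ∈ 𝓝 (0 : X)) (hFb : IsBounded F) :
    StrictQuasiconvexOn ℝ univ (gauge F) := by
  intro u _ v _ huv a b ha hb hab
  set m := max (gauge F u) (gauge F v)
  have hm : 0 < m := by
    by_contra! hm
    have hzero : ∀ w, gauge F w ≤ m → w = 0 := fun w hw =>
      (gauge_eq_zero (absorbent_nhds_zero hF0) ((NormedSpace.isVonNBounded_iff ℝ).2 hFb)).1
        (le_antisymm (hw.trans hm) (gauge_nonneg w))
    exact huv ((hzero u (le_max_left _ _)).trans (hzero v (le_max_right _ _)).symm)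
  have hmem : ∀ w, gauge F w ≤ m → m⁻¹ • w ∈ F := fun w hw => by
    rw [← hFc.closure_eq, ← gauge_le_one_iff_mem_closure hFs.convex hF0,
      gauge_smul_of_nonneg (inv_nonneg.2 hm.le), smul_eq_mul, inv_mul_le_one₀ hm]
    exact hw
  have hne : m⁻¹ • u ≠ m⁻¹ • v := (smul_right_injective X (inv_ne_zero hm.ne')).ne huv
  have hlt := interior_subset_gauge_lt_one F
    (hFs (hmem u (le_max_left _ _)) (hmem v (le_max_right _ _)) hne ha hb hab)
  rwa [mem_ofPred_eq, smul_comm a, smul_comm b, ← smul_add,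
    gauge_smul_of_nonneg (inv_nonneg.2 hm.le), smul_eq_mul, inv_mul_lt_one₀ hm] at hlt

theorem rhoF_sub_le_maxTime {F Ω : Set X} (hFconv : Convex ℝ F) (hF0 : F ∈ 𝓝 (0 : X))
    (hΩb : IsBounded Ω) (x : X) {q : X} (hq : q ∈ Ω) : rhoF F (q - x) ≤ maxTime F Ω x := by
  obtain ⟨K, hK⟩ := hFconv.lipschitz_gauge hF0
  refine le_csSup ?_ ⟨q, hq, rfl⟩
  rw [rhoF_eq_gauge (mem_of_mem_nhds hF0)]
  exact ((hK.comp (LipschitzWith.id.sub (LipschitzWith.const x))).isBounded_image hΩb).bddAbove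

theorem strictQuasiconvexOn_sSup_maxTime {ι : Type*} {F : Set X} {I : Finset ι} {Ω : ι → Set X}
    {S : Set X} (hFc : IsClosed F) (hFb : IsBounded F) (hF0 : F ∈ 𝓝 (0 : X))
    (hFs : StrictConvex ℝ F) (hΩb : ∀ i ∈ I, IsBounded (Ω i)) (hS : Convex ℝ S)
    (hI : I.Nonempty) (hP : ∀ x ∈ S, ∀ i ∈ I, (farProj F (Ω i) x).Nonempty) :
    StrictQuasiconvexOn ℝ S fun x => sSup ((fun i => maxTime F (Ω i) x) '' ↑I) := by
  intro x hx y hy hxy a b ha hb hab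
  have hle : ∀ w, ∀ i ∈ I, maxTime F (Ω i) w ≤ sSup ((fun i => maxTime F (Ω i) w) '' ↑I) :=
    fun w i hi => le_csSup (I.finite_toSet.image _).bddAbove ⟨i, hi, rfl⟩
  obtain ⟨i, hi, hi_max⟩ := ((Finset.coe_nonempty.2 hI).image _).csSup_mem
    (I.finite_toSet.image (fun i => maxTime F (Ω i) (a • x + b • y)))
  obtain ⟨ω, hωΩ, hω_far⟩ := hP _ (hS hx hy ha.le hb.le hab) i hi
  have hle_sSup : ∀ w, gauge F (ω - w) ≤ sSup ((fun i => maxTime F (Ω i) w) '' ↑I) := fun w => by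
    rw [← rhoF_eq_gauge (mem_of_mem_nhds hF0)]
    exact (rhoF_sub_le_maxTime hFs.convex hF0 (hΩb i hi) w hωΩ).trans (hle w i hi)
  have hsplit : ω - (a • x + b • y) = a • (ω - x) + b • (ω - y) := by
    linear_combination (norm := module) hab.symm • ω
  calc sSup ((fun i => maxTime F (Ω i) (a • x + b • y)) '' ↑I)
      = rhoF F (ω - (a • x + b • y)) := hi_max.symm.trans hω_far.symm
    _ = gauge F (a • (ω - x) + b • (ω - y)) := by rw [rhoF_eq_gauge (mem_of_mem_nhds hF0), hsplit]
    _ < max (gauge F (ω - x)) (gauge F (ω - y)) :=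
        hFs.strictQuasiconvexOn_gauge hFc hF0 hFb trivial trivial
          (fun h => hxy (sub_right_injective h)) ha hb hab
    _ ≤ _ := max_le_max (hle_sSup x) (hle_sSup y)

theorem stmt11_general {ι : Type*} (F : Set X) (I : Finset ι) (Ω : ι → Set X) (S : Set X)
    (hFc : IsClosed F) (hFb : IsBounded F)
    (hF0 : (0 : X) ∈ interior F) (hFs : StrictConvex ℝ F)
    (hΩb : ∀ i ∈ I, IsBounded (Ω i))
    (hSconv : Convex ℝ S)
    (hI : I.Nonempty)
    (hP : ∀ x ∈ S, ∀ i ∈ I, (farProj F (Ω i) x).Nonempty) :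
    {x ∈ S | ∀ y ∈ S,
      sSup ((fun i => maxTime F (Ω i) x) '' ↑I) ≤
        sSup ((fun i => maxTime F (Ω i) y) '' ↑I)}.Subsingleton :=
  (strictQuasiconvexOn_sSup_maxTime hFc hFb (mem_interior_iff_mem_nhds.1 hF0) hFs hΩb hSconv hI
    hP).subsingleton_setOf_forall_le hSconv

/-- Corollary 3.6 (i). -/
theorem stmt11 {ι : Type*} (F : Set X) (I : Finset ι) (Ω : ι → Set X) (S : Set X)
    (hFc : IsClosed F) (hFb : IsBounded F) (hFconv : Convex ℝ F)
    (hF0 : (0 : X) ∈ interior F) (hFs : StrictConvex ℝ F)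
    (hΩne : ∀ i ∈ I, (Ω i).Nonempty) (hΩc : ∀ i ∈ I, IsClosed (Ω i))
    (hΩb : ∀ i ∈ I, IsBounded (Ω i))
    (hSne : S.Nonempty) (hSc : IsClosed S) (hSconv : Convex ℝ S)
    (hI : I.Nonempty)
    (hP : ∀ x ∈ S, ∀ i ∈ I, (farProj F (Ω i) x).Nonempty) :
    {x ∈ S | ∀ y ∈ S,
      sSup ((fun i => maxTime F (Ω i) x) '' ↑I) ≤
        sSup ((fun i => maxTime F (Ω i) y) '' ↑I)}.Subsingleton :=
  stmt11_general F I Ω S hFc hFb hF0 hFs hΩb hSconv hI hP
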